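/- arXiv:1202.2390 — 4 statements merged into one kernel-verified Lean document; each statement's English description precedes it below -/
import Mathlib

section
/- Let B be a family of nonempty subsets of X. Then B is invariant under Φ (i.e. Φ(t,ω₁,ω₂,B(ω₁,ω₂)) = B(θ₁(t)ω₁,θ₂(t)ω₂) for all t ≥ 0, ω₁, ω₂) if and only if B is both positively invariant under Φ (i.e. Φ(t,ω₁,ω₂,B(ω₁,ω₂)) ⊆ B(θ₁(t)ω₁,θ₂(t)ω₂) for all t ≥ 0, ω₁, ω₂) and quasi-invariant under Φ. -/
open MeasureTheory Filter Set Topology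
open scoped ENNReal

namespace RDS

/-- A group of transformations of `α` parametrized by `ℝ`. -/
def IsGroupAction {α : Type*} (θ : ℝ → α → α) : Prop :=
  (∀ a, θ 0 a = a) ∧ ∀ s t : ℝ, ∀ a, θ (s + t) a = θ t (θ s a)

variable {Ω₁ Ω₂ X : Type*} [MetricSpace X] [MeasurableSpace X] [MeasurableSpace Ω₂]

/-- A continuous cocycle on `X` over the parametric dynamical systems
`(Ω₁, θ₁)` and `(Ω₂, ℱ₂, P, θ₂)` (Definition 2.1). -/
structure IsCocycle (θ₁ : ℝ → Ω₁ → Ω₁) (θ₂ : ℝ → Ω₂ → Ω₂)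
    (Φ : ℝ → Ω₁ → Ω₂ → X → X) : Prop where
  measurable : ∀ ω₁ : Ω₁,
    Measurable fun p : {t : ℝ // 0 ≤ t} × Ω₂ × X => Φ p.1.1 ω₁ p.2.1 p.2.2
  map_zero : ∀ (ω₁ : Ω₁) (ω₂ : Ω₂) (x : X), Φ 0 ω₁ ω₂ x = x
  cocycle : ∀ t τ : ℝ, 0 ≤ t → 0 ≤ τ → ∀ (ω₁ : Ω₁) (ω₂ : Ω₂) (x : X),
    Φ (t + τ) ω₁ ω₂ x = Φ t (θ₁ τ ω₁) (θ₂ τ ω₂) (Φ τ ω₁ ω₂ x)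
  continuous : ∀ t : ℝ, 0 ≤ t → ∀ (ω₁ : Ω₁) (ω₂ : Ω₂),
    Continuous fun x : X => Φ t ω₁ ω₂ x

/-- A complete orbit of the cocycle `Φ` (Definition 2.9). -/
def IsCompleteOrbit (θ₁ : ℝ → Ω₁ → Ω₁) (θ₂ : ℝ → Ω₂ → Ω₂)
    (Φ : ℝ → Ω₁ → Ω₂ → X → X) (ψ : ℝ → Ω₁ → Ω₂ → X) : Prop :=
  ∀ t τ : ℝ, 0 ≤ t → ∀ (ω₁ : Ω₁) (ω₂ : Ω₂),
    Φ t (θ₁ τ ω₁) (θ₂ τ ω₂) (ψ τ ω₁ ω₂) = ψ (t + τ) ω₁ ω₂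

/-- A `𝒟`-complete orbit of `Φ`. -/
def IsDCompleteOrbit (θ₁ : ℝ → Ω₁ → Ω₁) (θ₂ : ℝ → Ω₂ → Ω₂)
    (Φ : ℝ → Ω₁ → Ω₂ → X → X) (𝒟 : Set (Ω₁ → Ω₂ → Set X))
    (ψ : ℝ → Ω₁ → Ω₂ → X) : Prop :=
  IsCompleteOrbit θ₁ θ₂ Φ ψ ∧
    ∃ D ∈ 𝒟, ∀ (t : ℝ) (ω₁ : Ω₁) (ω₂ : Ω₂), ψ t ω₁ ω₂ ∈ D (θ₁ t ω₁) (θ₂ t ω₂)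

/-- Positive invariance of a family under `Φ`. -/
def PositivelyInvariant (θ₁ : ℝ → Ω₁ → Ω₁) (θ₂ : ℝ → Ω₂ → Ω₂)
    (Φ : ℝ → Ω₁ → Ω₂ → X → X) (B : Ω₁ → Ω₂ → Set X) : Prop :=
  ∀ t : ℝ, 0 ≤ t → ∀ (ω₁ : Ω₁) (ω₂ : Ω₂),
    Φ t ω₁ ω₂ '' B ω₁ ω₂ ⊆ B (θ₁ t ω₁) (θ₂ t ω₂)

/-- Invariance of a family under `Φ`. -/
def Invariant (θ₁ : ℝ → Ω₁ → Ω₁) (θ₂ : ℝ → Ω₂ → Ω₂)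
    (Φ : ℝ → Ω₁ → Ω₂ → X → X) (B : Ω₁ → Ω₂ → Set X) : Prop :=
  ∀ t : ℝ, 0 ≤ t → ∀ (ω₁ : Ω₁) (ω₂ : Ω₂),
    Φ t ω₁ ω₂ '' B ω₁ ω₂ = B (θ₁ t ω₁) (θ₂ t ω₂)

/-- Quasi-invariance of a family under `Φ`. -/
def QuasiInvariant (θ₁ : ℝ → Ω₁ → Ω₁) (θ₂ : ℝ → Ω₂ → Ω₂)
    (Φ : ℝ → Ω₁ → Ω₂ → X → X) (B : Ω₁ → Ω₂ → Set X) : Prop :=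
  ∀ y : Ω₁ → Ω₂ → X, (∀ (ω₁ : Ω₁) (ω₂ : Ω₂), y ω₁ ω₂ ∈ B ω₁ ω₂) →
    ∃ ψ : ℝ → Ω₁ → Ω₂ → X, IsCompleteOrbit θ₁ θ₂ Φ ψ ∧
      (∀ (ω₁ : Ω₁) (ω₂ : Ω₂), ψ 0 ω₁ ω₂ = y ω₁ ω₂) ∧
      ∀ (t : ℝ) (ω₁ : Ω₁) (ω₂ : Ω₂), ψ t ω₁ ω₂ ∈ B (θ₁ t ω₁) (θ₂ t ω₂)

/-- The Ω-limit set of a family `B` (Definition 2.13). -/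
def omegaLimit (θ₁ : ℝ → Ω₁ → Ω₁) (θ₂ : ℝ → Ω₂ → Ω₂)
    (Φ : ℝ → Ω₁ → Ω₂ → X → X) (B : Ω₁ → Ω₂ → Set X) (ω₁ : Ω₁) (ω₂ : Ω₂) : Set X :=
  ⋂ τ ∈ Ici (0 : ℝ), closure (⋃ t ∈ Ici τ,
    Φ t (θ₁ (-t) ω₁) (θ₂ (-t) ω₂) '' B (θ₁ (-t) ω₁) (θ₂ (-t) ω₂))

/-- `𝒟` is a collection of families of nonempty subsets of `X`. -/
def FamiliesOfNonemptySets (𝒟 : Set (Ω₁ → Ω₂ → Set X)) : Prop :=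
  ∀ D ∈ 𝒟, ∀ (ω₁ : Ω₁) (ω₂ : Ω₂), (D ω₁ ω₂).Nonempty

/-- Neighborhood closedness of the collection `𝒟` (Definition 2.5). -/
def NeighborhoodClosed (𝒟 : Set (Ω₁ → Ω₂ → Set X)) : Prop :=
  ∀ D ∈ 𝒟, ∃ ε : ℝ, 0 < ε ∧ ∀ B : Ω₁ → Ω₂ → Set X,
    (∀ (ω₁ : Ω₁) (ω₂ : Ω₂), (B ω₁ ω₂).Nonempty ∧
      B ω₁ ω₂ ⊆ Metric.thickening ε (D ω₁ ω₂)) → B ∈ 𝒟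

/-- Inclusion closedness of the collection `𝒟`. -/
def InclusionClosed (𝒟 : Set (Ω₁ → Ω₂ → Set X)) : Prop :=
  ∀ D ∈ 𝒟, ∀ B : Ω₁ → Ω₂ → Set X,
    (∀ (ω₁ : Ω₁) (ω₂ : Ω₂), (B ω₁ ω₂).Nonempty ∧ B ω₁ ω₂ ⊆ D ω₁ ω₂) → B ∈ 𝒟

/-- `𝒟`-pullback asymptotic compactness of `Φ` (Definition 2.16). -/
def AsymptoticallyCompact (θ₁ : ℝ → Ω₁ → Ω₁) (θ₂ : ℝ → Ω₂ → Ω₂)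
    (Φ : ℝ → Ω₁ → Ω₂ → X → X) (𝒟 : Set (Ω₁ → Ω₂ → Set X)) : Prop :=
  ∀ (ω₁ : Ω₁) (ω₂ : Ω₂), ∀ B ∈ 𝒟, ∀ (t : ℕ → ℝ) (x : ℕ → X),
    Tendsto t atTop atTop →
    (∀ n, x n ∈ B (θ₁ (-t n) ω₁) (θ₂ (-t n) ω₂)) →
    ∃ (φ : ℕ → ℕ) (y : X), StrictMono φ ∧
      Tendsto (fun n => Φ (t (φ n)) (θ₁ (-t (φ n)) ω₁) (θ₂ (-t (φ n)) ω₂) (x (φ n)))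
        atTop (𝓝 y)

/-- The Hausdorff semi-metric `d(C,B) = sup_{x ∈ C} inf_{b ∈ B} d(x,b)`,
valued in `ℝ≥0∞`. -/
noncomputable def hausSemidist (C B : Set X) : ℝ≥0∞ :=
  ⨆ x ∈ C, EMetric.infEdist x B

/-- The family `A` pullback attracts the family `B` under `Φ`. -/
def Attracts (θ₁ : ℝ → Ω₁ → Ω₁) (θ₂ : ℝ → Ω₂ → Ω₂)
    (Φ : ℝ → Ω₁ → Ω₂ → X → X) (B A : Ω₁ → Ω₂ → Set X) : Prop :=
  ∀ (ω₁ : Ω₁) (ω₂ : Ω₂),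
    Tendsto (fun t : ℝ => hausSemidist
        (Φ t (θ₁ (-t) ω₁) (θ₂ (-t) ω₂) '' B (θ₁ (-t) ω₁) (θ₂ (-t) ω₂)) (A ω₁ ω₂))
      atTop (𝓝 0)

/-- A `𝒟`-pullback absorbing set for `Φ` (Definition 2.15). -/
def IsAbsorbingSet (θ₁ : ℝ → Ω₁ → Ω₁) (θ₂ : ℝ → Ω₂ → Ω₂)
    (Φ : ℝ → Ω₁ → Ω₂ → X → X) (𝒟 : Set (Ω₁ → Ω₂ → Set X))
    (K : Ω₁ → Ω₂ → Set X) : Prop :=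
  K ∈ 𝒟 ∧ ∀ (ω₁ : Ω₁) (ω₂ : Ω₂), ∀ B ∈ 𝒟, ∃ T : ℝ, 0 < T ∧ ∀ t : ℝ, T ≤ t →
    Φ t (θ₁ (-t) ω₁) (θ₂ (-t) ω₂) '' B (θ₁ (-t) ω₁) (θ₂ (-t) ω₂) ⊆ K ω₁ ω₂

/-- A closed measurable (w.r.t. the `P`-completion of `ℱ₂`) `𝒟`-pullback
absorbing set for `Φ`. -/
def IsClosedMeasurableAbsorbingSet (θ₁ : ℝ → Ω₁ → Ω₁) (θ₂ : ℝ → Ω₂ → Ω₂)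
    (Φ : ℝ → Ω₁ → Ω₂ → X → X) (P : Measure Ω₂) (𝒟 : Set (Ω₁ → Ω₂ → Set X))
    (K : Ω₁ → Ω₂ → Set X) : Prop :=
  IsAbsorbingSet θ₁ θ₂ Φ 𝒟 K ∧
    (∀ (ω₁ : Ω₁) (ω₂ : Ω₂), IsClosed (K ω₁ ω₂) ∧ (K ω₁ ω₂).Nonempty) ∧
    ∀ (ω₁ : Ω₁) (x : X), NullMeasurable (fun ω₂ => Metric.infDist x (K ω₁ ω₂)) P

/-- A `𝒟`-pullback attractor for `Φ` (Definition 2.17). -/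
structure IsPullbackAttractor (θ₁ : ℝ → Ω₁ → Ω₁) (θ₂ : ℝ → Ω₂ → Ω₂)
    (Φ : ℝ → Ω₁ → Ω₂ → X → X) (P : Measure Ω₂) (𝒟 : Set (Ω₁ → Ω₂ → Set X))
    (A : Ω₁ → Ω₂ → Set X) : Prop where
  mem : A ∈ 𝒟
  compact : ∀ (ω₁ : Ω₁) (ω₂ : Ω₂), IsCompact (A ω₁ ω₂)
  measurable : ∀ (ω₁ : Ω₁) (x : X),
    NullMeasurable (fun ω₂ => Metric.infDist x (A ω₁ ω₂)) P
  invariant : Invariant θ₁ θ₂ Φ A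
  attracts : ∀ B ∈ 𝒟, Attracts θ₁ θ₂ Φ B A

theorem invariant_iff_positively_and_quasi
    {Ω₁ Ω₂ X : Type*} [Nonempty Ω₁]
    [MetricSpace X] [CompleteSpace X] [SecondCountableTopology X]
    [MeasurableSpace X] [BorelSpace X]
    [MeasurableSpace Ω₂] (P : Measure Ω₂) [IsProbabilityMeasure P]
    (θ₁ : ℝ → Ω₁ → Ω₁) (θ₂ : ℝ → Ω₂ → Ω₂)
    (hθ₁ : IsGroupAction θ₁) (hθ₂ : IsGroupAction θ₂)
    (hθ₂meas : Measurable fun p : ℝ × Ω₂ => θ₂ p.1 p.2)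
    (hθ₂pres : ∀ t : ℝ, MeasurePreserving (θ₂ t) P P)
    (Φ : ℝ → Ω₁ → Ω₂ → X → X)
    (hΦ : IsCocycle θ₁ θ₂ Φ)
    (B : Ω₁ → Ω₂ → Set X)
    (hBne : ∀ (ω₁ : Ω₁) (ω₂ : Ω₂), (B ω₁ ω₂).Nonempty) :
    Invariant θ₁ θ₂ Φ B ↔
      PositivelyInvariant θ₁ θ₂ Φ B ∧ QuasiInvariant θ₁ θ₂ Φ B := by
  classical
  have hcomp₁ : ∀ (s u : ℝ) (a : Ω₁), θ₁ u (θ₁ s a) = θ₁ (s + u) a :=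
    fun s u a => (hθ₁.2 s u a).symm
  have hcomp₂ : ∀ (s u : ℝ) (a : Ω₂), θ₂ u (θ₂ s a) = θ₂ (s + u) a :=
    fun s u a => (hθ₂.2 s u a).symm
  have hcancel₁ : ∀ (s : ℝ) (a : Ω₁), θ₁ (-s) (θ₁ s a) = a := by
    intro s a; rw [hcomp₁, add_neg_cancel, hθ₁.1]
  have hcancel₂ : ∀ (s : ℝ) (a : Ω₂), θ₂ (-s) (θ₂ s a) = a := by
    intro s a; rw [hcomp₂, add_neg_cancel, hθ₂.1]
  constructor
  · intro hInv
    refine ⟨fun t ht ω₁ ω₂ => (hInv t ht ω₁ ω₂).le, ?_⟩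
    intro y hy
    -- step: pick a preimage one unit of time back
    have hstep : ∀ (n : ℕ) (z : Ω₁ → Ω₂ → X), ∃ w : Ω₁ → Ω₂ → X,
        ∀ ω₁ ω₂, z ω₁ ω₂ ∈ B (θ₁ (-(n : ℝ)) ω₁) (θ₂ (-(n : ℝ)) ω₂) →
          w ω₁ ω₂ ∈ B (θ₁ (-((n : ℝ) + 1)) ω₁) (θ₂ (-((n : ℝ) + 1)) ω₂) ∧
          Φ 1 (θ₁ (-((n : ℝ) + 1)) ω₁) (θ₂ (-((n : ℝ) + 1)) ω₂) (w ω₁ ω₂) = z ω₁ ω₂ := by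
      intro n z
      have key : ∀ ω₁ ω₂, ∃ w : X,
          z ω₁ ω₂ ∈ B (θ₁ (-(n : ℝ)) ω₁) (θ₂ (-(n : ℝ)) ω₂) →
            w ∈ B (θ₁ (-((n : ℝ) + 1)) ω₁) (θ₂ (-((n : ℝ) + 1)) ω₂) ∧
            Φ 1 (θ₁ (-((n : ℝ) + 1)) ω₁) (θ₂ (-((n : ℝ) + 1)) ω₂) w = z ω₁ ω₂ := by
        intro ω₁ ω₂
        by_cases hz : z ω₁ ω₂ ∈ B (θ₁ (-(n : ℝ)) ω₁) (θ₂ (-(n : ℝ)) ω₂)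
        · have hInv1 := hInv 1 zero_le_one (θ₁ (-((n : ℝ) + 1)) ω₁) (θ₂ (-((n : ℝ) + 1)) ω₂)
          have e1 : θ₁ 1 (θ₁ (-((n : ℝ) + 1)) ω₁) = θ₁ (-(n : ℝ)) ω₁ := by
            rw [hcomp₁]; norm_num
          have e2 : θ₂ 1 (θ₂ (-((n : ℝ) + 1)) ω₂) = θ₂ (-(n : ℝ)) ω₂ := by
            rw [hcomp₂]; norm_num
          rw [e1, e2] at hInv1
          have := hInv1 ▸ hz
          obtain ⟨w, hw, hw'⟩ := (hInv1 ▸ hz :)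
          exact ⟨w, fun _ => ⟨hw, hw'⟩⟩
        · exact ⟨(hBne ω₁ ω₂).some, fun h => absurd h hz⟩
      choose w hw using key
      exact ⟨w, hw⟩
    choose g hg using hstep
    set x : ℕ → Ω₁ → Ω₂ → X := fun n => Nat.rec y (fun n z => g n z) n with hxdef
    have hx0 : x 0 = y := rfl
    have hxsucc : ∀ n, x (n + 1) = g n (x n) := fun n => rfl
    have hmem : ∀ (n : ℕ) (ω₁ : Ω₁) (ω₂ : Ω₂),
        x n ω₁ ω₂ ∈ B (θ₁ (-(n : ℝ)) ω₁) (θ₂ (-(n : ℝ)) ω₂) := by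
      intro n
      induction n with
      | zero =>
        intro ω₁ ω₂
        simpa [hx0, hθ₁.1, hθ₂.1] using hy ω₁ ω₂
      | succ n ih =>
        intro ω₁ ω₂
        have := (hg n (x n) ω₁ ω₂ (ih ω₁ ω₂)).1
        rw [hxsucc n]
        convert this using 3 <;> push_cast <;> ring
    have hrel : ∀ (n : ℕ) (ω₁ : Ω₁) (ω₂ : Ω₂),
        Φ 1 (θ₁ (-((n : ℝ) + 1)) ω₁) (θ₂ (-((n : ℝ) + 1)) ω₂) (x (n + 1) ω₁ ω₂)
          = x n ω₁ ω₂ := by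
      intro n ω₁ ω₂
      rw [hxsucc n]
      exact (hg n (x n) ω₁ ω₂ (hmem n ω₁ ω₂)).2
    -- Lemma A: flowing forward k steps recovers earlier elements
    have hA : ∀ (k n : ℕ) (ω₁ : Ω₁) (ω₂ : Ω₂),
        Φ (k : ℝ) (θ₁ (-((n : ℝ) + (k : ℝ))) ω₁) (θ₂ (-((n : ℝ) + (k : ℝ))) ω₂)
          (x (n + k) ω₁ ω₂) = x n ω₁ ω₂ := by
      intro k
      induction k with
      | zero =>
        intro n ω₁ ω₂
        simp [hΦ.map_zero]
      | succ k ih =>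
        intro n ω₁ ω₂
        have hcoc := hΦ.cocycle (k : ℝ) 1 (Nat.cast_nonneg k) zero_le_one
          (θ₁ (-((n : ℝ) + (k : ℝ) + 1)) ω₁) (θ₂ (-((n : ℝ) + (k : ℝ) + 1)) ω₂)
          (x (n + k + 1) ω₁ ω₂)
        have e1 : θ₁ 1 (θ₁ (-((n : ℝ) + (k : ℝ) + 1)) ω₁) = θ₁ (-((n : ℝ) + (k : ℝ))) ω₁ := by
          rw [hcomp₁]; norm_num
        have e2 : θ₂ 1 (θ₂ (-((n : ℝ) + (k : ℝ) + 1)) ω₂) = θ₂ (-((n : ℝ) + (k : ℝ))) ω₂ := by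
          rw [hcomp₂]; norm_num
        have hrel' : Φ 1 (θ₁ (-((n : ℝ) + (k : ℝ) + 1)) ω₁)
            (θ₂ (-((n : ℝ) + (k : ℝ) + 1)) ω₂) (x (n + k + 1) ω₁ ω₂) = x (n + k) ω₁ ω₂ := by
          have := hrel (n + k) ω₁ ω₂
          convert this using 3 <;> push_cast <;> ring
        rw [e1, e2, hrel', ih n ω₁ ω₂] at hcoc
        rw [← hcoc]
        congr 1 <;> try push_cast <;> ring
    -- the backward index
    set N : ℝ → ℕ := fun τ => ⌈-τ⌉₊ with hNdef
    have hN : ∀ τ : ℝ, 0 ≤ τ + (N τ : ℝ) := by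
      intro τ
      have := Nat.le_ceil (-τ)
      simp only [hNdef]
      linarith
    set ψ : ℝ → Ω₁ → Ω₂ → X := fun τ ω₁ ω₂ =>
      Φ (τ + (N τ : ℝ)) (θ₁ (-(N τ : ℝ)) ω₁) (θ₂ (-(N τ : ℝ)) ω₂) (x (N τ) ω₁ ω₂) with hψdef
    -- Lemma B: ψ τ can be computed from any sufficiently large index
    have hB : ∀ (τ : ℝ) (n : ℕ), 0 ≤ τ + (n : ℝ) → ∀ ω₁ ω₂,
        Φ (τ + (n : ℝ)) (θ₁ (-(n : ℝ)) ω₁) (θ₂ (-(n : ℝ)) ω₂) (x n ω₁ ω₂)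
          = ψ τ ω₁ ω₂ := by
      intro τ n hn ω₁ ω₂
      have hle : N τ ≤ n := by
        apply Nat.ceil_le.mpr
        linarith
      obtain ⟨k, rfl⟩ : ∃ k, n = N τ + k := ⟨n - N τ, (Nat.add_sub_cancel' hle).symm⟩
      have hcoc := hΦ.cocycle (τ + (N τ : ℝ)) (k : ℝ) (hN τ) (Nat.cast_nonneg k)
        (θ₁ (-((N τ : ℝ) + (k : ℝ))) ω₁) (θ₂ (-((N τ : ℝ) + (k : ℝ))) ω₂)
        (x (N τ + k) ω₁ ω₂)
      have e1 : θ₁ (k : ℝ) (θ₁ (-((N τ : ℝ) + (k : ℝ))) ω₁) = θ₁ (-(N τ : ℝ)) ω₁ := by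
        rw [hcomp₁]; ring_nf
      have e2 : θ₂ (k : ℝ) (θ₂ (-((N τ : ℝ) + (k : ℝ))) ω₂) = θ₂ (-(N τ : ℝ)) ω₂ := by
        rw [hcomp₂]; ring_nf
      rw [e1, e2, hA k (N τ) ω₁ ω₂] at hcoc
      have e3 : τ + ((N τ + k : ℕ) : ℝ) = τ + (N τ : ℝ) + (k : ℝ) := by push_cast; ring
      have e4 : (-(((N τ : ℕ) + k : ℕ) : ℝ)) = -((N τ : ℝ) + (k : ℝ)) := by push_cast; ring
      rw [e3, e4, hcoc]
    refine ⟨ψ, ?_, ?_, ?_⟩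
    · -- complete orbit
      intro t τ ht ω₁ ω₂
      have hcoc := hΦ.cocycle t (τ + (N τ : ℝ)) ht (hN τ)
        (θ₁ (-(N τ : ℝ)) ω₁) (θ₂ (-(N τ : ℝ)) ω₂) (x (N τ) ω₁ ω₂)
      have e1 : θ₁ (τ + (N τ : ℝ)) (θ₁ (-(N τ : ℝ)) ω₁) = θ₁ τ ω₁ := by
        rw [hcomp₁]; ring_nf
      have e2 : θ₂ (τ + (N τ : ℝ)) (θ₂ (-(N τ : ℝ)) ω₂) = θ₂ τ ω₂ := by
        rw [hcomp₂]; ring_nf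
      rw [e1, e2] at hcoc
      have e3 : t + (τ + (N τ : ℝ)) = (t + τ) + (N τ : ℝ) := by ring
      rw [e3] at hcoc
      have hB' := hB (t + τ) (N τ) (by linarith [hN τ]) ω₁ ω₂
      calc Φ t (θ₁ τ ω₁) (θ₂ τ ω₂) (ψ τ ω₁ ω₂)
          = Φ ((t + τ) + (N τ : ℝ)) (θ₁ (-(N τ : ℝ)) ω₁) (θ₂ (-(N τ : ℝ)) ω₂)
              (x (N τ) ω₁ ω₂) := hcoc.symm
        _ = ψ (t + τ) ω₁ ω₂ := hB' 
    · -- ψ 0 = y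
      intro ω₁ ω₂
      have := (hB 0 0 (by norm_num) ω₁ ω₂).symm
      simpa [hΦ.map_zero, hx0] using this
    · -- ψ t ∈ B (θ t ω)
      intro τ ω₁ ω₂
      have hmem' : ψ τ ω₁ ω₂ ∈
          Φ (τ + (N τ : ℝ)) (θ₁ (-(N τ : ℝ)) ω₁) (θ₂ (-(N τ : ℝ)) ω₂) ''
            B (θ₁ (-(N τ : ℝ)) ω₁) (θ₂ (-(N τ : ℝ)) ω₂) :=
        ⟨x (N τ) ω₁ ω₂, hmem (N τ) ω₁ ω₂, rfl⟩
      rw [hInv (τ + (N τ : ℝ)) (hN τ) (θ₁ (-(N τ : ℝ)) ω₁) (θ₂ (-(N τ : ℝ)) ω₂)] at hmem'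
      have e1 : θ₁ (τ + (N τ : ℝ)) (θ₁ (-(N τ : ℝ)) ω₁) = θ₁ τ ω₁ := by
        rw [hcomp₁]; ring_nf
      have e2 : θ₂ (τ + (N τ : ℝ)) (θ₂ (-(N τ : ℝ)) ω₂) = θ₂ τ ω₂ := by
        rw [hcomp₂]; ring_nf
      rwa [e1, e2] at hmem'
  · rintro ⟨hPos, hQuasi⟩ t ht ω₁ ω₂
    refine subset_antisymm (hPos t ht ω₁ ω₂) ?_
    intro b hb
    set y : Ω₁ → Ω₂ → X := fun α β =>
      if α = θ₁ t ω₁ ∧ β = θ₂ t ω₂ then b else (hBne α β).some with hydef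
    have hy : ∀ α β, y α β ∈ B α β := by
      intro α β
      simp only [hydef]
      split_ifs with h
      · rw [h.1, h.2]; exact hb
      · exact (hBne α β).some_mem
    obtain ⟨ψ, hψorb, hψ0, hψmem⟩ := hQuasi y hy
    refine ⟨ψ (-t) (θ₁ t ω₁) (θ₂ t ω₂), ?_, ?_⟩
    · have := hψmem (-t) (θ₁ t ω₁) (θ₂ t ω₂)
      rwa [hcancel₁, hcancel₂] at this
    · have horb := hψorb t (-t) ht (θ₁ t ω₁) (θ₂ t ω₂)
      rw [hcancel₁, hcancel₂, add_neg_cancel, hψ0] at horb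
      rw [horb]
      simp [hydef]


end RDS
end

section
/- Suppose Φ is 𝒟-pullback asymptotically compact in X. Then for every D ∈ 𝒟, ω₁ ∈ Ω₁ and ω₂ ∈ Ω₂, the Ω-limit set Ω(D,ω₁,ω₂) is nonempty and compact, and it pullback attracts D, i.e. lim_{t→∞} d_H(Φ(t,θ₁(−t)ω₁,θ₂(−t)ω₂,D(θ₁(−t)ω₁,θ₂(−t)ω₂)), Ω(D,ω₁,ω₂)) = 0, where d_H(C,B)=sup_{x∈C} inf_{b∈B} d(x,b) is the Hausdorff semi-metric. -/
open MeasureTheory Filter Set Topology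
open scoped ENNReal

namespace RDS

variable {Ω₁ Ω₂ X : Type*} [MetricSpace X] [MeasurableSpace X] [MeasurableSpace Ω₂]

/-!
All three assertions are statements about the single family of sets
`F t = Φ(t, θ(-t)ω, D(θ(-t)ω))`, whose Ω-limit set is `⋂_{τ ≥ 0} cl ⋃_{t ≥ τ} F t`, and all three
follow from one observation: asymptotic compactness turns any sequence `xₙ ∈ F tₙ` with
`tₙ → ∞` into one with a subsequence converging to a point of the Ω-limit set. Taking arbitrary
`xₙ` gives nonemptiness; approximating a sequence of the Ω-limit set by such `xₙ` gives
sequential compactness; and points `xₙ ∈ F tₙ` staying `ε` away from the Ω-limit set would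
contradict it, which gives attraction.
-/

section LimitSet

variable {X : Type*} [MetricSpace X]

def limitSet (F : ℝ → Set X) : Set X :=
  ⋂ τ ∈ Ici (0 : ℝ), closure (⋃ t ∈ Ici τ, F t)

def AsymptoticallyCompactFamily (F : ℝ → Set X) : Prop :=
  ∀ (t : ℕ → ℝ) (x : ℕ → X), Tendsto t atTop atTop → (∀ n, x n ∈ F (t n)) →
    ∃ (φ : ℕ → ℕ) (y : X), StrictMono φ ∧ Tendsto (x ∘ φ) atTop (𝓝 y)

variable {F : ℝ → Set X}

theorem mem_limitSet_of_tendsto {t : ℕ → ℝ} {x : ℕ → X} {y : X}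
    (ht : Tendsto t atTop atTop) (hx : ∀ n, x n ∈ F (t n)) (hy : Tendsto x atTop (𝓝 y)) :
    y ∈ limitSet F := by
  simp only [limitSet, mem_iInter]
  intro τ _
  refine mem_closure_of_tendsto hy ?_
  filter_upwards [ht.eventually_ge_atTop τ] with n hn
  exact mem_biUnion hn (hx n)

theorem exists_dist_lt_of_mem_limitSet {y : X} (hy : y ∈ limitSet F) {τ ε : ℝ}
    (hτ : 0 ≤ τ) (hε : 0 < ε) : ∃ t, τ ≤ t ∧ ∃ x ∈ F t, dist y x < ε := by
  simp only [limitSet, mem_iInter] at hy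
  obtain ⟨x, hx, hyx⟩ := Metric.mem_closure_iff.mp (hy τ hτ) ε hε
  obtain ⟨t, ht, hxt⟩ := mem_iUnion₂.mp hx
  exact ⟨t, ht, x, hxt, hyx⟩

namespace AsymptoticallyCompactFamily

theorem exists_subseq_tendsto_mem_limitSet (hF : AsymptoticallyCompactFamily F)
    {t : ℕ → ℝ} {x : ℕ → X} (ht : Tendsto t atTop atTop) (hx : ∀ n, x n ∈ F (t n)) :
    ∃ φ : ℕ → ℕ, ∃ y ∈ limitSet F, StrictMono φ ∧ Tendsto (x ∘ φ) atTop (𝓝 y) := by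
  obtain ⟨φ, y, hφ, hy⟩ := hF t x ht hx
  exact ⟨φ, y, mem_limitSet_of_tendsto (ht.comp hφ.tendsto_atTop) (fun n => hx (φ n)) hy, hφ, hy⟩

theorem limitSet_nonempty (hF : AsymptoticallyCompactFamily F) (hne : ∀ t, (F t).Nonempty) :
    (limitSet F).Nonempty := by
  choose x hx using fun n : ℕ => hne n
  obtain ⟨-, y, hy, -⟩ := hF.exists_subseq_tendsto_mem_limitSet tendsto_natCast_atTop_atTop hx
  exact ⟨y, hy⟩

theorem isCompact_limitSet (hF : AsymptoticallyCompactFamily F) : IsCompact (limitSet F) := by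
  refine IsSeqCompact.isCompact fun y hy => ?_
  choose t ht x hx hyx using fun n : ℕ =>
    exists_dist_lt_of_mem_limitSet (hy n) n.cast_nonneg (Nat.one_div_pos_of_nat (α := ℝ))
  obtain ⟨φ, w, hw, hφ, hxw⟩ := hF.exists_subseq_tendsto_mem_limitSet
    (tendsto_atTop_mono ht tendsto_natCast_atTop_atTop) hx
  have hxy : Tendsto (fun n => dist (x n) (y n)) atTop (𝓝 0) :=
    squeeze_zero (fun _ => dist_nonneg) (fun n => (dist_comm (x n) (y n)).trans_le (hyx n).le)
      tendsto_one_div_add_atTop_nhds_zero_nat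
  exact ⟨w, hw, φ, hφ, hxw.congr_dist (hxy.comp hφ.tendsto_atTop)⟩

theorem tendsto_hausSemidist_limitSet [MeasurableSpace X]
    (hF : AsymptoticallyCompactFamily F) :
    Tendsto (fun t => hausSemidist (F t) (limitSet F)) atTop (𝓝 0) := by
  rw [ENNReal.tendsto_nhds_zero]
  by_contra! hfar
  obtain ⟨ε, hε, hfreq⟩ := hfar
  have hfar_pt : ∀ n : ℕ, ∃ t, (n : ℝ) ≤ t ∧ ∃ x ∈ F t, ε < Metric.infEDist x (limitSet F) := by
    intro n
    obtain ⟨t, ht, hlt⟩ := frequently_atTop.mp hfreq n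
    simp only [hausSemidist, lt_iSup_iff] at hlt
    obtain ⟨x, hx, hεx⟩ := hlt
    exact ⟨t, ht, x, hx, hεx⟩
  choose t ht x hx hεx using hfar_pt
  obtain ⟨φ, w, hw, -, hxw⟩ := hF.exists_subseq_tendsto_mem_limitSet
    (tendsto_atTop_mono ht tendsto_natCast_atTop_atTop) hx
  have hlim : Tendsto (fun n => Metric.infEDist (x (φ n)) (limitSet F)) atTop (𝓝 0) := by
    rw [← Metric.infEDist_zero_of_mem hw]
    exact (Metric.continuous_infEDist.tendsto w).comp hxw
  exact hε.not_ge (ge_of_tendsto hlim (Eventually.of_forall fun n => (hεx (φ n)).le))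

end AsymptoticallyCompactFamily

end LimitSet

section Pullback

variable {Ω₁ Ω₂ X : Type*}

def pullbackImage (θ₁ : ℝ → Ω₁ → Ω₁) (θ₂ : ℝ → Ω₂ → Ω₂) (Φ : ℝ → Ω₁ → Ω₂ → X → X)
    (D : Ω₁ → Ω₂ → Set X) (ω₁ : Ω₁) (ω₂ : Ω₂) (t : ℝ) : Set X :=
  Φ t (θ₁ (-t) ω₁) (θ₂ (-t) ω₂) '' D (θ₁ (-t) ω₁) (θ₂ (-t) ω₂)

theorem AsymptoticallyCompact.asymptoticallyCompactFamily [MetricSpace X] [MeasurableSpace X]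
    [MeasurableSpace Ω₂] {θ₁ : ℝ → Ω₁ → Ω₁} {θ₂ : ℝ → Ω₂ → Ω₂} {Φ : ℝ → Ω₁ → Ω₂ → X → X}
    {𝒟 : Set (Ω₁ → Ω₂ → Set X)} (hac : AsymptoticallyCompact θ₁ θ₂ Φ 𝒟)
    {D : Ω₁ → Ω₂ → Set X} (hD : D ∈ 𝒟) (ω₁ : Ω₁) (ω₂ : Ω₂) :
    AsymptoticallyCompactFamily (pullbackImage θ₁ θ₂ Φ D ω₁ ω₂) := by
  intro t y ht hy
  choose x hx hxy using hy
  obtain ⟨φ, z, hφ, hz⟩ := hac ω₁ ω₂ D hD t x ht hx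
  refine ⟨φ, z, hφ, ?_⟩
  simpa only [Function.comp_def, hxy] using hz

end Pullback

theorem omegaLimit_nonempty_compact_attracts_general
    {Ω₁ Ω₂ X : Type*} [MetricSpace X] [MeasurableSpace X] [MeasurableSpace Ω₂]
    (θ₁ : ℝ → Ω₁ → Ω₁) (θ₂ : ℝ → Ω₂ → Ω₂)
    (Φ : ℝ → Ω₁ → Ω₂ → X → X)
    (𝒟 : Set (Ω₁ → Ω₂ → Set X))
    (h𝒟ne : FamiliesOfNonemptySets 𝒟)
    (hac : AsymptoticallyCompact θ₁ θ₂ Φ 𝒟) :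
    ∀ D ∈ 𝒟, ∀ (ω₁ : Ω₁) (ω₂ : Ω₂),
      (omegaLimit θ₁ θ₂ Φ D ω₁ ω₂).Nonempty ∧
      IsCompact (omegaLimit θ₁ θ₂ Φ D ω₁ ω₂) ∧
      Tendsto (fun t : ℝ => hausSemidist
          (Φ t (θ₁ (-t) ω₁) (θ₂ (-t) ω₂) '' D (θ₁ (-t) ω₁) (θ₂ (-t) ω₂))
          (omegaLimit θ₁ θ₂ Φ D ω₁ ω₂))
        atTop (𝓝 0) := by
  intro D hD ω₁ ω₂
  have hF := hac.asymptoticallyCompactFamily hD ω₁ ω₂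
  exact ⟨hF.limitSet_nonempty fun _ => (h𝒟ne D hD _ _).image _, hF.isCompact_limitSet,
    hF.tendsto_hausSemidist_limitSet⟩

theorem omegaLimit_nonempty_compact_attracts
    {Ω₁ Ω₂ X : Type*} [Nonempty Ω₁]
    [MetricSpace X] [CompleteSpace X] [SecondCountableTopology X]
    [MeasurableSpace X] [BorelSpace X]
    [MeasurableSpace Ω₂] (P : Measure Ω₂) [IsProbabilityMeasure P]
    (θ₁ : ℝ → Ω₁ → Ω₁) (θ₂ : ℝ → Ω₂ → Ω₂)
    (hθ₁ : IsGroupAction θ₁) (hθ₂ : IsGroupAction θ₂)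
    (hθ₂meas : Measurable fun p : ℝ × Ω₂ => θ₂ p.1 p.2)
    (hθ₂pres : ∀ t : ℝ, MeasurePreserving (θ₂ t) P P)
    (Φ : ℝ → Ω₁ → Ω₂ → X → X)
    (hΦ : IsCocycle θ₁ θ₂ Φ)
    (𝒟 : Set (Ω₁ → Ω₂ → Set X))
    (h𝒟ne : FamiliesOfNonemptySets 𝒟)
    (hac : AsymptoticallyCompact θ₁ θ₂ Φ 𝒟) :
    ∀ D ∈ 𝒟, ∀ (ω₁ : Ω₁) (ω₂ : Ω₂),
      (omegaLimit θ₁ θ₂ Φ D ω₁ ω₂).Nonempty ∧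
      IsCompact (omegaLimit θ₁ θ₂ Φ D ω₁ ω₂) ∧
      Tendsto (fun t : ℝ => hausSemidist
          (Φ t (θ₁ (-t) ω₁) (θ₂ (-t) ω₂) '' D (θ₁ (-t) ω₁) (θ₂ (-t) ω₂))
          (omegaLimit θ₁ θ₂ Φ D ω₁ ω₂))
        atTop (𝓝 0) :=
  omegaLimit_nonempty_compact_attracts_general θ₁ θ₂ Φ 𝒟 h𝒟ne hac

end RDS
end

section
/- Suppose Φ is 𝒟-pullback asymptotically compact in X. Then for every D ∈ 𝒟, the Ω-limit set family Ω(D) = {Ω(D,ω₁,ω₂) : ω₁ ∈ Ω₁, ω₂ ∈ Ω₂} is quasi-invariant under Φ. -/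
open MeasureTheory Filter Set Topology
open scoped ENNReal

/-! Asymptotic compactness makes the Ω-limit family invariant. Forward invariance only needs
continuity of `Φ`. Backward: if `y = lim Φ(tₙ, θ(-tₙ)ω) xₙ`, a limit point `z` of
`Φ(tₙ - s, θ(-tₙ)ω) xₙ` exists by asymptotic compactness, lies in `Ω(D, θ(-s)ω)`, and
`Φ(s, θ(-s)ω) z = y` by the cocycle property and continuity.

An invariant family is quasi-invariant: by dependent choice, `y` has preimages `z k` over
`θ(-k)ω` under the time-one maps, and `ψ s = Φ(s + k, θ(-k)ω) (z k)`, for any `k ≥ -s`, is a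
complete orbit through `y` which stays in the family. -/

namespace RDS

section GroupAction

variable {α : Type*} {θ : ℝ → α → α}

lemma IsGroupAction.apply_apply_of_add_eq (hθ : IsGroupAction θ) {s t u : ℝ} (h : s + t = u)
    (a : α) : θ t (θ s a) = θ u a := by
  rw [← hθ.2, h]

lemma IsGroupAction.apply_apply_of_add_eq_zero (hθ : IsGroupAction θ) {s t : ℝ}
    (h : s + t = 0) (a : α) : θ t (θ s a) = a := by
  rw [hθ.apply_apply_of_add_eq h, hθ.1]

end GroupAction

variable {Ω₁ Ω₂ X : Type*} {θ₁ : ℝ → Ω₁ → Ω₁} {θ₂ : ℝ → Ω₂ → Ω₂} {Φ : ℝ → Ω₁ → Ω₂ → X → X}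

section BackwardOrbit

variable {ω₁ : Ω₁} {ω₂ : Ω₂}

def IsBackwardOrbit (θ₁ : ℝ → Ω₁ → Ω₁) (θ₂ : ℝ → Ω₂ → Ω₂) (Φ : ℝ → Ω₁ → Ω₂ → X → X)
    (ω₁ : Ω₁) (ω₂ : Ω₂) (z : ℕ → X) : Prop :=
  ∀ k : ℕ, Φ 1 (θ₁ (-(k + 1)) ω₁) (θ₂ (-(k + 1)) ω₂) (z (k + 1)) = z k

lemma Invariant.exists_isBackwardOrbit (hθ₁ : IsGroupAction θ₁) (hθ₂ : IsGroupAction θ₂)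
    {B : Ω₁ → Ω₂ → Set X} (hB : Invariant θ₁ θ₂ Φ B) {y : X} (hy : y ∈ B ω₁ ω₂) :
    ∃ z : ℕ → X, z 0 = y ∧ (∀ k : ℕ, z k ∈ B (θ₁ (-k) ω₁) (θ₂ (-k) ω₂)) ∧
      IsBackwardOrbit θ₁ θ₂ Φ ω₁ ω₂ z := by
  have step : ∀ (k : ℕ) (a : X), ∃ b : X, a ∈ B (θ₁ (-k) ω₁) (θ₂ (-k) ω₂) →
      b ∈ B (θ₁ (-(k + 1)) ω₁) (θ₂ (-(k + 1)) ω₂) ∧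
        Φ 1 (θ₁ (-(k + 1)) ω₁) (θ₂ (-(k + 1)) ω₂) b = a := by
    intro k a
    by_cases ha : a ∈ B (θ₁ (-k) ω₁) (θ₂ (-k) ω₂)
    · have hshift : -((k : ℝ) + 1) + 1 = -k := by ring
      rw [← hθ₁.apply_apply_of_add_eq hshift, ← hθ₂.apply_apply_of_add_eq hshift,
        ← hB 1 zero_le_one] at ha
      obtain ⟨b, hb, rfl⟩ := ha
      exact ⟨b, fun _ => ⟨hb, rfl⟩⟩
    · exact ⟨a, fun h => absurd h ha⟩
  choose g hg using step
  let z : ℕ → X := fun k => Nat.rec y g k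
  have hzB : ∀ k : ℕ, z k ∈ B (θ₁ (-k) ω₁) (θ₂ (-k) ω₂) := by
    intro k
    induction k with
    | zero =>
      simp only [Nat.cast_zero, neg_zero, hθ₁.1, hθ₂.1]
      exact hy
    | succ k ih => simpa only [Nat.cast_succ] using (hg k (z k) ih).1
  exact ⟨z, rfl, hzB, fun k => (hg k (z k) (hzB k)).2⟩

end BackwardOrbit

variable [MetricSpace X]

section OmegaLimit

variable {D : Ω₁ → Ω₂ → Set X} {ω₁ : Ω₁} {ω₂ : Ω₂} {y : X}

lemma mem_omegaLimit_of_tendsto {t : ℕ → ℝ} {x : ℕ → X} (ht : Tendsto t atTop atTop)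
    (hx : ∀ n, x n ∈ D (θ₁ (-t n) ω₁) (θ₂ (-t n) ω₂))
    (hy : Tendsto (fun n => Φ (t n) (θ₁ (-t n) ω₁) (θ₂ (-t n) ω₂) (x n)) atTop (𝓝 y)) :
    y ∈ omegaLimit θ₁ θ₂ Φ D ω₁ ω₂ := by
  refine mem_iInter₂.2 fun τ _ => mem_closure_of_tendsto hy ?_
  filter_upwards [ht.eventually_ge_atTop τ] with n hn
  exact mem_biUnion hn ⟨x n, hx n, rfl⟩

lemma exists_tendsto_of_mem_omegaLimit (hy : y ∈ omegaLimit θ₁ θ₂ Φ D ω₁ ω₂) :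
    ∃ (t : ℕ → ℝ) (x : ℕ → X), Tendsto t atTop atTop ∧
      (∀ n, x n ∈ D (θ₁ (-t n) ω₁) (θ₂ (-t n) ω₂)) ∧
      Tendsto (fun n => Φ (t n) (θ₁ (-t n) ω₁) (θ₂ (-t n) ω₂) (x n)) atTop (𝓝 y) := by
  have approx : ∀ n : ℕ, ∃ (s : ℝ) (p : X), (n : ℝ) ≤ s ∧
      p ∈ D (θ₁ (-s) ω₁) (θ₂ (-s) ω₂) ∧
      dist (Φ s (θ₁ (-s) ω₁) (θ₂ (-s) ω₂) p) y < 1 / (n + 1) := by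
    intro n
    obtain ⟨_, hp, hd⟩ := Metric.mem_closure_iff.1 (mem_iInter₂.1 hy n (mem_Ici.2 n.cast_nonneg))
      (1 / (n + 1)) Nat.one_div_pos_of_nat
    simp only [mem_iUnion, mem_image, mem_Ici] at hp
    obtain ⟨s, hs, p, hp, rfl⟩ := hp
    exact ⟨s, p, hs, hp, by rwa [dist_comm]⟩
  choose t x hnt hx hdist using approx
  refine ⟨t, x, tendsto_atTop_mono hnt tendsto_natCast_atTop_atTop, hx, ?_⟩
  exact tendsto_iff_dist_tendsto_zero.2 (squeeze_zero (fun n => dist_nonneg)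
    (fun n => (hdist n).le) tendsto_one_div_add_atTop_nhds_zero_nat)

end OmegaLimit

variable [MeasurableSpace X] [MeasurableSpace Ω₂]

lemma IsCocycle.apply_apply_of_add_eq (hΦ : IsCocycle θ₁ θ₂ Φ) (hθ₁ : IsGroupAction θ₁)
    (hθ₂ : IsGroupAction θ₂) {t τ a b : ℝ} (ht : 0 ≤ t) (hτ : 0 ≤ τ) (hab : a + τ = b)
    (ω₁ : Ω₁) (ω₂ : Ω₂) (x : X) :
    Φ t (θ₁ b ω₁) (θ₂ b ω₂) (Φ τ (θ₁ a ω₁) (θ₂ a ω₂) x) = Φ (t + τ) (θ₁ a ω₁) (θ₂ a ω₂) x := by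
  rw [hΦ.cocycle t τ ht hτ, hθ₁.apply_apply_of_add_eq hab, hθ₂.apply_apply_of_add_eq hab]

section CompleteOrbit

variable {ω₁ : Ω₁} {ω₂ : Ω₂} {z : ℕ → X}

lemma IsBackwardOrbit.apply_natCast (hθ₁ : IsGroupAction θ₁) (hθ₂ : IsGroupAction θ₂)
    (hΦ : IsCocycle θ₁ θ₂ Φ) (hz : IsBackwardOrbit θ₁ θ₂ Φ ω₁ ω₂ z) (k j : ℕ) :
    Φ j (θ₁ (-(k + j : ℕ)) ω₁) (θ₂ (-(k + j : ℕ)) ω₂) (z (k + j)) = z k := by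
  induction j with
  | zero => simp only [Nat.cast_zero, add_zero, hΦ.map_zero]
  | succ j ih =>
    rw [← ih, ← hz (k + j), hΦ.apply_apply_of_add_eq hθ₁ hθ₂ j.cast_nonneg zero_le_one
      (by push_cast; ring)]
    push_cast
    ring_nf

lemma IsBackwardOrbit.apply_add_natCast_eq (hθ₁ : IsGroupAction θ₁) (hθ₂ : IsGroupAction θ₂)
    (hΦ : IsCocycle θ₁ θ₂ Φ) (hz : IsBackwardOrbit θ₁ θ₂ Φ ω₁ ω₂ z) {s : ℝ} {k m : ℕ}
    (hk : -s ≤ k) (hm : -s ≤ m) :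
    Φ (s + m) (θ₁ (-m) ω₁) (θ₂ (-m) ω₂) (z m) = Φ (s + k) (θ₁ (-k) ω₁) (θ₂ (-k) ω₂) (z k) := by
  wlog hkm : k ≤ m generalizing k m
  · exact (this hm hk (le_of_not_ge hkm)).symm
  obtain ⟨j, rfl⟩ := Nat.exists_eq_add_of_le hkm
  rw [← hz.apply_natCast hθ₁ hθ₂ hΦ k j,
    hΦ.apply_apply_of_add_eq hθ₁ hθ₂ (by linarith) j.cast_nonneg (by push_cast; ring)]
  congr 1
  push_cast
  ring

lemma IsBackwardOrbit.exists_extension (hθ₁ : IsGroupAction θ₁) (hθ₂ : IsGroupAction θ₂)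
    (hΦ : IsCocycle θ₁ θ₂ Φ) (hz : IsBackwardOrbit θ₁ θ₂ Φ ω₁ ω₂ z) :
    ∃ ψ : ℝ → X, (∀ t τ : ℝ, 0 ≤ t → Φ t (θ₁ τ ω₁) (θ₂ τ ω₂) (ψ τ) = ψ (t + τ)) ∧
      ∀ (s : ℝ) (k : ℕ), -s ≤ k → ψ s = Φ (s + k) (θ₁ (-k) ω₁) (θ₂ (-k) ω₂) (z k) := by
  refine ⟨fun s => Φ (s + ⌈-s⌉₊) (θ₁ (-⌈-s⌉₊) ω₁) (θ₂ (-⌈-s⌉₊) ω₂) (z ⌈-s⌉₊),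
    fun t τ ht => ?_, fun s k hk => hz.apply_add_natCast_eq hθ₁ hθ₂ hΦ hk (Nat.le_ceil _)⟩
  have hτ : -τ ≤ ⌈-τ⌉₊ := Nat.le_ceil _
  beta_reduce
  rw [hz.apply_add_natCast_eq hθ₁ hθ₂ hΦ (show -(t + τ) ≤ ⌈-τ⌉₊ by linarith) (Nat.le_ceil _),
    hΦ.apply_apply_of_add_eq hθ₁ hθ₂ ht (by linarith) (by ring), add_assoc]

lemma Invariant.exists_orbit_through (hθ₁ : IsGroupAction θ₁) (hθ₂ : IsGroupAction θ₂)
    (hΦ : IsCocycle θ₁ θ₂ Φ) {B : Ω₁ → Ω₂ → Set X} (hB : Invariant θ₁ θ₂ Φ B)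
    {y : X} (hy : y ∈ B ω₁ ω₂) :
    ∃ ψ : ℝ → X, (∀ t τ : ℝ, 0 ≤ t → Φ t (θ₁ τ ω₁) (θ₂ τ ω₂) (ψ τ) = ψ (t + τ)) ∧
      ψ 0 = y ∧ ∀ s : ℝ, ψ s ∈ B (θ₁ s ω₁) (θ₂ s ω₂) := by
  obtain ⟨z, rfl, hzB, hz⟩ := hB.exists_isBackwardOrbit hθ₁ hθ₂ hy
  obtain ⟨ψ, hψ, hψz⟩ := hz.exists_extension hθ₁ hθ₂ hΦ
  refine ⟨ψ, hψ, ?_, fun s => ?_⟩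
  · rw [hψz 0 0 (by simp)]
    simp only [Nat.cast_zero, add_zero, hΦ.map_zero]
  · have hs : 0 ≤ s + ⌈-s⌉₊ := by linarith [Nat.le_ceil (-s)]
    have hshift : -(⌈-s⌉₊ : ℝ) + (s + ⌈-s⌉₊) = s := by ring
    rw [hψz s _ (Nat.le_ceil _), ← hθ₁.apply_apply_of_add_eq hshift,
      ← hθ₂.apply_apply_of_add_eq hshift, ← hB _ hs]
    exact mem_image_of_mem _ (hzB _)

end CompleteOrbit

lemma Invariant.quasiInvariant (hθ₁ : IsGroupAction θ₁) (hθ₂ : IsGroupAction θ₂)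
    (hΦ : IsCocycle θ₁ θ₂ Φ) {B : Ω₁ → Ω₂ → Set X} (hB : Invariant θ₁ θ₂ Φ B) :
    QuasiInvariant θ₁ θ₂ Φ B := by
  intro y hy
  choose ψ hψ hψ0 hψB using fun ω₁ ω₂ => hB.exists_orbit_through hθ₁ hθ₂ hΦ (hy ω₁ ω₂)
  exact ⟨fun t ω₁ ω₂ => ψ ω₁ ω₂ t, fun t τ ht ω₁ ω₂ => hψ ω₁ ω₂ t τ ht, hψ0,
    fun t ω₁ ω₂ => hψB ω₁ ω₂ t⟩

section Invariance

variable {D : Ω₁ → Ω₂ → Set X}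

lemma mapsTo_omegaLimit (hθ₁ : IsGroupAction θ₁) (hθ₂ : IsGroupAction θ₂)
    (hΦ : IsCocycle θ₁ θ₂ Φ) {t : ℝ} (ht : 0 ≤ t) (ω₁ : Ω₁) (ω₂ : Ω₂) :
    MapsTo (Φ t ω₁ ω₂) (omegaLimit θ₁ θ₂ Φ D ω₁ ω₂)
      (omegaLimit θ₁ θ₂ Φ D (θ₁ t ω₁) (θ₂ t ω₂)) := by
  intro y hy
  obtain ⟨s, x, hs, hx, hxy⟩ := exists_tendsto_of_mem_omegaLimit hy
  have hbase₁ : ∀ n, θ₁ (-(t + s n)) (θ₁ t ω₁) = θ₁ (-s n) ω₁ :=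
    fun n => hθ₁.apply_apply_of_add_eq (by ring) ω₁
  have hbase₂ : ∀ n, θ₂ (-(t + s n)) (θ₂ t ω₂) = θ₂ (-s n) ω₂ :=
    fun n => hθ₂.apply_apply_of_add_eq (by ring) ω₂
  refine mem_omegaLimit_of_tendsto (t := fun n => t + s n) (x := x)
    (tendsto_atTop_add_const_left _ t hs) (fun n => by rw [hbase₁, hbase₂]; exact hx n) ?_
  refine (((hΦ.continuous t ht ω₁ ω₂).tendsto y).comp hxy).congr' ?_
  filter_upwards [hs.eventually_ge_atTop 0] with n hn
  rw [Function.comp_apply, hbase₁, hbase₂, hΦ.cocycle t (s n) ht hn,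
    hθ₁.apply_apply_of_add_eq_zero (neg_add_cancel _),
    hθ₂.apply_apply_of_add_eq_zero (neg_add_cancel _)]

lemma omegaLimit_subset_image (hθ₁ : IsGroupAction θ₁) (hθ₂ : IsGroupAction θ₂)
    (hΦ : IsCocycle θ₁ θ₂ Φ) {𝒟 : Set (Ω₁ → Ω₂ → Set X)}
    (hac : AsymptoticallyCompact θ₁ θ₂ Φ 𝒟) (hD : D ∈ 𝒟) {s : ℝ} (hs : 0 ≤ s)
    (ω₁ : Ω₁) (ω₂ : Ω₂) :
    omegaLimit θ₁ θ₂ Φ D ω₁ ω₂ ⊆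
      Φ s (θ₁ (-s) ω₁) (θ₂ (-s) ω₂) '' omegaLimit θ₁ θ₂ Φ D (θ₁ (-s) ω₁) (θ₂ (-s) ω₂) := by
  intro y hy
  obtain ⟨t, x, ht, hx, hxy⟩ := exists_tendsto_of_mem_omegaLimit hy
  have hbase₁ : ∀ n, θ₁ (-(t n - s)) (θ₁ (-s) ω₁) = θ₁ (-t n) ω₁ :=
    fun n => hθ₁.apply_apply_of_add_eq (by ring) ω₁
  have hbase₂ : ∀ n, θ₂ (-(t n - s)) (θ₂ (-s) ω₂) = θ₂ (-t n) ω₂ :=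
    fun n => hθ₂.apply_apply_of_add_eq (by ring) ω₂
  have hts : Tendsto (fun n => t n - s) atTop atTop := by
    simpa only [sub_eq_add_neg] using tendsto_atTop_add_const_right _ (-s) ht
  have hx' : ∀ n, x n ∈ D (θ₁ (-(t n - s)) (θ₁ (-s) ω₁)) (θ₂ (-(t n - s)) (θ₂ (-s) ω₂)) :=
    fun n => by rw [hbase₁, hbase₂]; exact hx n
  obtain ⟨φ, z, hφ, hz⟩ := hac _ _ D hD _ x hts hx'
  refine ⟨z, mem_omegaLimit_of_tendsto (hts.comp hφ.tendsto_atTop) (fun n => hx' (φ n)) hz, ?_⟩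
  refine tendsto_nhds_unique ((((hΦ.continuous s hs _ _).tendsto z).comp hz).congr' ?_)
    (hxy.comp hφ.tendsto_atTop)
  filter_upwards [(ht.comp hφ.tendsto_atTop).eventually_ge_atTop s] with n (hn : s ≤ t (φ n))
  rw [Function.comp_apply, Function.comp_apply, hbase₁, hbase₂,
    hΦ.apply_apply_of_add_eq hθ₁ hθ₂ hs (sub_nonneg.2 hn) (by ring), add_sub_cancel]

lemma invariant_omegaLimit (hθ₁ : IsGroupAction θ₁) (hθ₂ : IsGroupAction θ₂)
    (hΦ : IsCocycle θ₁ θ₂ Φ) {𝒟 : Set (Ω₁ → Ω₂ → Set X)}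
    (hac : AsymptoticallyCompact θ₁ θ₂ Φ 𝒟) (hD : D ∈ 𝒟) :
    Invariant θ₁ θ₂ Φ (omegaLimit θ₁ θ₂ Φ D) := by
  intro t ht ω₁ ω₂
  refine (mapsTo_omegaLimit hθ₁ hθ₂ hΦ ht ω₁ ω₂).image_subset.antisymm fun y hy => ?_
  obtain ⟨z, hz, rfl⟩ := omegaLimit_subset_image hθ₁ hθ₂ hΦ hac hD ht _ _ hy
  rw [hθ₁.apply_apply_of_add_eq_zero (add_neg_cancel t),
    hθ₂.apply_apply_of_add_eq_zero (add_neg_cancel t)] at hz ⊢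
  exact mem_image_of_mem _ hz

end Invariance

theorem omegaLimit_quasiInvariant_general
    {Ω₁ Ω₂ X : Type*} [MetricSpace X] [MeasurableSpace X] [MeasurableSpace Ω₂]
    (θ₁ : ℝ → Ω₁ → Ω₁) (θ₂ : ℝ → Ω₂ → Ω₂)
    (hθ₁ : IsGroupAction θ₁) (hθ₂ : IsGroupAction θ₂)
    (Φ : ℝ → Ω₁ → Ω₂ → X → X)
    (hΦ : IsCocycle θ₁ θ₂ Φ)
    (𝒟 : Set (Ω₁ → Ω₂ → Set X))
    (hac : AsymptoticallyCompact θ₁ θ₂ Φ 𝒟) :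
    ∀ D ∈ 𝒟, QuasiInvariant θ₁ θ₂ Φ (fun ω₁ ω₂ => omegaLimit θ₁ θ₂ Φ D ω₁ ω₂) :=
  fun _ hD => (invariant_omegaLimit hθ₁ hθ₂ hΦ hac hD).quasiInvariant hθ₁ hθ₂ hΦ

theorem omegaLimit_quasiInvariant
    {Ω₁ Ω₂ X : Type*} [Nonempty Ω₁]
    [MetricSpace X] [CompleteSpace X] [SecondCountableTopology X]
    [MeasurableSpace X] [BorelSpace X]
    [MeasurableSpace Ω₂] (P : Measure Ω₂) [IsProbabilityMeasure P]
    (θ₁ : ℝ → Ω₁ → Ω₁) (θ₂ : ℝ → Ω₂ → Ω₂)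
    (hθ₁ : IsGroupAction θ₁) (hθ₂ : IsGroupAction θ₂)
    (hθ₂meas : Measurable fun p : ℝ × Ω₂ => θ₂ p.1 p.2)
    (hθ₂pres : ∀ t : ℝ, MeasurePreserving (θ₂ t) P P)
    (Φ : ℝ → Ω₁ → Ω₂ → X → X)
    (hΦ : IsCocycle θ₁ θ₂ Φ)
    (𝒟 : Set (Ω₁ → Ω₂ → Set X))
    (h𝒟ne : FamiliesOfNonemptySets 𝒟)
    (hac : AsymptoticallyCompact θ₁ θ₂ Φ 𝒟) :
    ∀ D ∈ 𝒟, QuasiInvariant θ₁ θ₂ Φ (fun ω₁ ω₂ => omegaLimit θ₁ θ₂ Φ D ω₁ ω₂) :=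
  omegaLimit_quasiInvariant_general θ₁ θ₂ hθ₁ hθ₂ Φ hΦ 𝒟 hac

end RDS
end

section
/- Let 𝒟 be a neighborhood closed collection of families of nonempty subsets of X. If Φ has a 𝒟-pullback attractor 𝒜 ∈ 𝒟, then Φ has a closed measurable 𝒟-pullback absorbing set K ∈ 𝒟 (in particular, for each ω₁ and x ∈ X, ω₂ ↦ d(x,K(ω₁,ω₂)) is measurable with respect to the P-completion of ℱ₂). -/
open MeasureTheory Filter Set Topology
open scoped ENNReal

/-!
Take `K ω = closure (thickening δ (A ω))` with `δ` below the neighborhood-closedness radius of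
the attractor `A`, so that `K ∈ 𝒟`. Pullback attraction of `B ∈ 𝒟` by `A` in the Hausdorff
semi-metric puts the pulled-back images of `B` inside the `δ`-thickening of `A` for large times.
For measurability, the distance from `x` to the open set `thickening δ (A ω)` is the infimum of
`edist x y` over the points `y` of a countable dense set lying in it, and `y` lies in it exactly
when `infDist y (A ω) < δ`, a measurable condition on `ω`.
-/

namespace Metric

variable {X : Type*}

theorem infEDist_eq_iInf_of_denseRange_of_isOpen [PseudoEMetricSpace X] {ι : Type*}
    {e : ι → X} (he : DenseRange e) {U : Set X} (hU : IsOpen U) (x : X) :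
    infEDist x U = ⨅ (i) (_ : e i ∈ U), edist x (e i) := by
  refine le_antisymm (le_iInf₂ fun i hi => infEDist_le_edist_of_mem hi) ?_
  calc ⨅ (i) (_ : e i ∈ U), edist x (e i)
      = infEDist x (U ∩ range e) := by
        rw [← image_preimage_eq_inter_range, infEDist, iInf_image]; rfl
    _ = infEDist x (closure (U ∩ range e)) := infEDist_closure.symm
    _ ≤ infEDist x U := infEDist_anti (he.open_subset_closure_inter hU)

theorem nullMeasurable_infEDist_of_isOpen [PseudoEMetricSpace X]
    [TopologicalSpace.SeparableSpace X]
    {Ω : Type*} [MeasurableSpace Ω] {P : Measure Ω} {U : Ω → Set X}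
    (hU : ∀ ω, IsOpen (U ω)) (hmem : ∀ y, NullMeasurableSet {ω | y ∈ U ω} P) (x : X) :
    NullMeasurable (fun ω => infEDist x (U ω)) P := by
  classical
  have : Nonempty X := ⟨x⟩
  have he := TopologicalSpace.denseRange_denseSeq X
  simp_rw [infEDist_eq_iInf_of_denseRange_of_isOpen he (hU _), iInf_eq_if]
  exact Measurable.iInf fun n => Measurable.ite (hmem _) measurable_const measurable_const

theorem nullMeasurable_infDist_closure_thickening [PseudoMetricSpace X]
    [TopologicalSpace.SeparableSpace X]
    {Ω : Type*} [MeasurableSpace Ω] {P : Measure Ω} {A : Ω → Set X}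
    (hne : ∀ ω, (A ω).Nonempty)
    (hA : ∀ y, NullMeasurable (fun ω => infDist y (A ω)) P) (δ : ℝ) (x : X) :
    NullMeasurable (fun ω => infDist x (closure (thickening δ (A ω)))) P := by
  simp_rw [infDist, infEDist_closure]
  refine ENNReal.measurable_toReal.comp_nullMeasurable
    (nullMeasurable_infEDist_of_isOpen (fun _ => isOpen_thickening) (fun y => ?_) x)
  simp_rw [mem_thickening_iff_infDist_lt (hne _)]
  exact hA y measurableSet_Iio

end Metric

namespace RDS

variable {Ω₁ Ω₂ X : Type*} [MetricSpace X]

theorem subset_thickening_of_hausSemidist_lt {C A : Set X} {δ : ℝ}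
    (h : hausSemidist C A < ENNReal.ofReal δ) : C ⊆ Metric.thickening δ A := fun y hy =>
  Metric.mem_thickening_iff_infEDist_lt.2 <|
    (le_iSup₂ (f := fun z (_ : z ∈ C) => Metric.infEDist z A) y hy).trans_lt h

theorem Attracts.eventually_image_subset_thickening {θ₁ : ℝ → Ω₁ → Ω₁} {θ₂ : ℝ → Ω₂ → Ω₂}
    {Φ : ℝ → Ω₁ → Ω₂ → X → X} {B A : Ω₁ → Ω₂ → Set X} (h : Attracts θ₁ θ₂ Φ B A)
    {δ : ℝ} (hδ : 0 < δ) (ω₁ : Ω₁) (ω₂ : Ω₂) :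
    ∀ᶠ t in atTop, Φ t (θ₁ (-t) ω₁) (θ₂ (-t) ω₂) '' B (θ₁ (-t) ω₁) (θ₂ (-t) ω₂) ⊆
      Metric.thickening δ (A ω₁ ω₂) :=
  (h ω₁ ω₂ |>.eventually (gt_mem_nhds (ENNReal.ofReal_pos.2 hδ))).mono fun _ =>
    subset_thickening_of_hausSemidist_lt

theorem isAbsorbingSet_of_thickening_subset {θ₁ : ℝ → Ω₁ → Ω₁} {θ₂ : ℝ → Ω₂ → Ω₂}
    {Φ : ℝ → Ω₁ → Ω₂ → X → X} {𝒟 : Set (Ω₁ → Ω₂ → Set X)} {A K : Ω₁ → Ω₂ → Set X}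
    (hA : ∀ B ∈ 𝒟, Attracts θ₁ θ₂ Φ B A) (hK : K ∈ 𝒟) {δ : ℝ} (hδ : 0 < δ)
    (hsub : ∀ ω₁ ω₂, Metric.thickening δ (A ω₁ ω₂) ⊆ K ω₁ ω₂) :
    IsAbsorbingSet θ₁ θ₂ Φ 𝒟 K := by
  refine ⟨hK, fun ω₁ ω₂ B hB => ?_⟩
  obtain ⟨T, hT⟩ := ((hA B hB).eventually_image_subset_thickening hδ ω₁ ω₂ |>.and
    (eventually_gt_atTop 0)).exists_forall_of_atTop
  exact ⟨T, (hT T le_rfl).2, fun t ht => (hT t ht).1.trans (hsub ω₁ ω₂)⟩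

theorem NeighborhoodClosed.exists_closure_thickening_mem {𝒟 : Set (Ω₁ → Ω₂ → Set X)}
    (h𝒟 : NeighborhoodClosed 𝒟) {D : Ω₁ → Ω₂ → Set X} (hD : D ∈ 𝒟)
    (hne : ∀ ω₁ ω₂, (D ω₁ ω₂).Nonempty) :
    ∃ δ > 0, (fun ω₁ ω₂ => closure (Metric.thickening δ (D ω₁ ω₂))) ∈ 𝒟 := by
  obtain ⟨ε, hε, hmem⟩ := h𝒟 D hD
  refine ⟨ε / 2, half_pos hε, hmem _ fun ω₁ ω₂ => ⟨?_, ?_⟩⟩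
  · exact ((hne ω₁ ω₂).mono (Metric.self_subset_thickening (half_pos hε) _)).closure
  · exact (Metric.closure_thickening_subset_cthickening _ _).trans
      (Metric.cthickening_subset_thickening' hε (half_lt_self hε) _)

theorem attractor_implies_absorbing_general
    {Ω₁ Ω₂ X : Type*}
    [MetricSpace X] [SecondCountableTopology X]
    [MeasurableSpace Ω₂] (P : Measure Ω₂)
    (θ₁ : ℝ → Ω₁ → Ω₁) (θ₂ : ℝ → Ω₂ → Ω₂)
    (Φ : ℝ → Ω₁ → Ω₂ → X → X)
    (𝒟 : Set (Ω₁ → Ω₂ → Set X))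
    (h𝒟ne : FamiliesOfNonemptySets 𝒟)
    (h𝒟nc : NeighborhoodClosed 𝒟)
    (A : Ω₁ → Ω₂ → Set X)
    (hA : IsPullbackAttractor θ₁ θ₂ Φ P 𝒟 A) :
    ∃ K : Ω₁ → Ω₂ → Set X, IsClosedMeasurableAbsorbingSet θ₁ θ₂ Φ P 𝒟 K := by
  have hAne := h𝒟ne A hA.mem
  obtain ⟨δ, hδ, hK⟩ := h𝒟nc.exists_closure_thickening_mem hA.mem hAne
  refine ⟨_, isAbsorbingSet_of_thickening_subset hA.attracts hK hδ fun _ _ => subset_closure,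
    fun ω₁ ω₂ => ⟨isClosed_closure,
      ((hAne ω₁ ω₂).mono (Metric.self_subset_thickening hδ _)).closure⟩,
    fun ω₁ x => Metric.nullMeasurable_infDist_closure_thickening (hAne ω₁) (hA.measurable ω₁) δ x⟩

theorem attractor_implies_absorbing
    {Ω₁ Ω₂ X : Type*} [Nonempty Ω₁]
    [MetricSpace X] [CompleteSpace X] [SecondCountableTopology X]
    [MeasurableSpace X] [BorelSpace X]
    [MeasurableSpace Ω₂] (P : Measure Ω₂) [IsProbabilityMeasure P]
    (θ₁ : ℝ → Ω₁ → Ω₁) (θ₂ : ℝ → Ω₂ → Ω₂)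
    (hθ₁ : IsGroupAction θ₁) (hθ₂ : IsGroupAction θ₂)
    (hθ₂meas : Measurable fun p : ℝ × Ω₂ => θ₂ p.1 p.2)
    (hθ₂pres : ∀ t : ℝ, MeasurePreserving (θ₂ t) P P)
    (Φ : ℝ → Ω₁ → Ω₂ → X → X)
    (hΦ : IsCocycle θ₁ θ₂ Φ)
    (𝒟 : Set (Ω₁ → Ω₂ → Set X))
    (h𝒟ne : FamiliesOfNonemptySets 𝒟)
    (h𝒟nc : NeighborhoodClosed 𝒟)
    (A : Ω₁ → Ω₂ → Set X)
    (hA : IsPullbackAttractor θ₁ θ₂ Φ P 𝒟 A) :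
    ∃ K : Ω₁ → Ω₂ → Set X, IsClosedMeasurableAbsorbingSet θ₁ θ₂ Φ P 𝒟 K :=
  attractor_implies_absorbing_general P θ₁ θ₂ Φ 𝒟 h𝒟ne h𝒟nc A hA

end RDS
end
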